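/- arXiv:q-alg/9711020 — 3 statements merged into one kernel-verified Lean document; each statement's English description precedes it below -/
import Mathlib

section
/- Let R be a Hecke operator on V which is an odd-even Hecke operator of super rank (m, n): there exist strictly positive real numbers t_1, …, t_m and u_1, …, u_n with ∏_{i=1}^m t_i = 1 and ∏_{j=1}^n u_j = 1 such that (Σ_{k≥0} λ_k X^k) · ∏_{j=1}^{n}(1 − u_j X) = ∏_{i=1}^{m}(1 + t_i X) in ℝ[[X]]. Then m + n ≤ dim_K V, and if m + n = dim_K V then t_i = 1 and u_j = 1 for all i, j, so that P_Λ(t) = (1+t)^m (1−t)^{−n}, i.e. λ_k = Σ_{a+b=k} C(m, a)·C(n+b−1, b) for all k ≥ 0. (Corollary 5.2) -/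
open TensorProduct

/-- The Yang–Baxter equation for an operator `R` on `V ⊗ V`, stated on `(V ⊗ V) ⊗ V`:
`(R ⊗ 1)(1 ⊗ R)(R ⊗ 1) = (1 ⊗ R)(R ⊗ 1)(1 ⊗ R)`, where `1 ⊗ R` is transported along
the associator. -/
def YangBaxter (K : Type*) [Field K] (V : Type*) [AddCommGroup V] [Module K V]
    (R : V ⊗[K] V →ₗ[K] V ⊗[K] V) : Prop :=
  let R₁ : (V ⊗[K] V) ⊗[K] V →ₗ[K] (V ⊗[K] V) ⊗[K] V := LinearMap.rTensor V R
  let R₂ : (V ⊗[K] V) ⊗[K] V →ₗ[K] (V ⊗[K] V) ⊗[K] V :=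
    (TensorProduct.assoc K V V V).symm.toLinearMap ∘ₗ LinearMap.lTensor V R ∘ₗ
      (TensorProduct.assoc K V V V).toLinearMap
  R₁ ∘ₗ R₂ ∘ₗ R₁ = R₂ ∘ₗ R₁ ∘ₗ R₂

/-- A Hecke operator on `V` for the parameter `q`: the Yang–Baxter equation together
with the Hecke equation `(R + 1)(R − q) = 0`. -/
def IsHecke (K : Type*) [Field K] (V : Type*) [AddCommGroup V] [Module K V]
    (q : K) (R : V ⊗[K] V →ₗ[K] V ⊗[K] V) : Prop :=
  YangBaxter K V R ∧ (R + LinearMap.id) ∘ₗ (R - q • LinearMap.id) = 0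

/-- The multiplication map `V ⊗ V → T(V)` of the tensor algebra. -/
noncomputable def quadMul (K : Type*) [Field K] (V : Type*) [AddCommGroup V] [Module K V] :
    V ⊗[K] V →ₗ[K] TensorAlgebra K V :=
  LinearMap.mul' K (TensorAlgebra K V) ∘ₗ
    TensorProduct.map (TensorAlgebra.ι K) (TensorAlgebra.ι K)

/-- The relation on `T(V)` identifying the image of `W ⊆ V ⊗ V` with zero; quotienting
by (the two-sided ideal generated by) it yields the quadratic algebra `T(V)/⟨W⟩`. -/
def quadRel (K : Type*) [Field K] (V : Type*) [AddCommGroup V] [Module K V]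
    (W : Submodule K (V ⊗[K] V)) : TensorAlgebra K V → TensorAlgebra K V → Prop :=
  fun a b => b = 0 ∧ ∃ w ∈ W, a = quadMul K V w

/-- The dimension of the `n`-th homogeneous component of the quadratic algebra
`T(V)/⟨W⟩`, realised as the image of the degree-`n` component of `T(V)` in the
quotient algebra. -/
noncomputable def quadDim (K : Type*) [Field K] (V : Type*) [AddCommGroup V] [Module K V]
    (W : Submodule K (V ⊗[K] V)) (n : ℕ) : ℕ :=
  Module.finrank K
    (Submodule.map (RingQuot.mkAlgHom K (quadRel K V W)).toLinearMap
      (LinearMap.range (TensorAlgebra.ι K (M := V)) ^ n))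

/-- `λ_n`, the dimension of the `n`-th homogeneous component of `Λ = T(V)/⟨Im(R+1)⟩`. -/
noncomputable def lambdaDim (K : Type*) [Field K] (V : Type*) [AddCommGroup V] [Module K V]
    (R : V ⊗[K] V →ₗ[K] V ⊗[K] V) (n : ℕ) : ℕ :=
  quadDim K V (LinearMap.range (R + LinearMap.id)) n

/-- `s_n`, the dimension of the `n`-th homogeneous component of `S = T(V)/⟨Im(R−q)⟩`. -/
noncomputable def sDim (K : Type*) [Field K] (V : Type*) [AddCommGroup V] [Module K V]
    (q : K) (R : V ⊗[K] V →ₗ[K] V ⊗[K] V) (n : ℕ) : ℕ :=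
  quadDim K V (LinearMap.range (R - q • LinearMap.id)) n

section Aux

open PowerSeries Finset

lemma auxC0 {ι : Type*} (s : Finset ι) (a : ι → ℝ) :
    PowerSeries.constantCoeff (∏ i ∈ s, (1 + PowerSeries.C (a i) * PowerSeries.X)) = 1 := by
  rw [map_prod]
  simp

lemma auxC1 {ι : Type*} (s : Finset ι) (a : ι → ℝ) :
    PowerSeries.coeff 1 (∏ i ∈ s, (1 + PowerSeries.C (a i) * PowerSeries.X))
      = ∑ i ∈ s, a i := by
  induction s using Finset.cons_induction with
  | empty => simp
  | cons i s hi ih =>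
    rw [prod_cons, PowerSeries.coeff_one_mul, auxC0, ih, sum_cons]
    simp [mul_comm]

lemma auxAMGM {m : ℕ} (t : Fin m → ℝ) (ht : ∀ i, 0 < t i) (hp : ∏ i, t i = 1) :
    (m : ℝ) ≤ ∑ i, t i ∧ (∑ i, t i = m → ∀ i, t i = 1) := by
  have hlog : ∑ i, Real.log (t i) = 0 := by
    rw [← Real.log_prod (fun i _ => (ht i).ne'), hp, Real.log_one]
  have hterm : ∀ i, 0 ≤ t i - 1 - Real.log (t i) := fun i => by
    have := Real.log_le_sub_one_of_pos (ht i); linarith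
  have hsum : ∑ i, (t i - 1 - Real.log (t i)) = ∑ i, t i - m := by
    rw [Finset.sum_sub_distrib, Finset.sum_sub_distrib, hlog]
    simp [Finset.card_univ]
  constructor
  · have h : (0:ℝ) ≤ ∑ i, (t i - 1 - Real.log (t i)) :=
      Finset.sum_nonneg (fun i _ => hterm i)
    rw [hsum] at h; linarith
  · intro heq i
    have h0 : ∑ i, (t i - 1 - Real.log (t i)) = 0 := by rw [hsum, heq]; ring
    have h1 := (Finset.sum_eq_zero_iff_of_nonneg (fun i _ => hterm i)).mp h0 i (Finset.mem_univ i)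
    by_contra hne
    have := Real.log_lt_sub_one_of_pos (ht i) hne
    linarith

lemma auxBinom (m a : ℕ) :
    PowerSeries.coeff a ((1 + PowerSeries.X) ^ m) = (m.choose a : ℝ) := by
  have h : ((1 + PowerSeries.X : PowerSeries ℝ)) = (((1 + Polynomial.X : Polynomial ℝ) : PowerSeries ℝ)) := by
    rw [Polynomial.coe_add, Polynomial.coe_one, Polynomial.coe_X]
  rw [h, ← Polynomial.coe_pow, Polynomial.coeff_coe, Polynomial.coeff_one_add_X_pow]

lemma auxInv (n b : ℕ) :
    PowerSeries.coeff b (PowerSeries.invOneSubPow ℝ n).val = ((n + b - 1).choose b : ℝ) := by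
  cases n with
  | zero =>
    rw [PowerSeries.invOneSubPow_zero]
    cases b with
    | zero => simp
    | succ b =>
      rw [Units.val_one, PowerSeries.coeff_one]
      simp [Nat.choose_eq_zero_of_lt]
  | succ d =>
    rw [PowerSeries.invOneSubPow_val_succ_eq_mk_add_choose, PowerSeries.coeff_mk]
    rw [show d + 1 + b - 1 = d + b by omega]
    have h := Nat.choose_symm (Nat.le_add_left b d)
    rw [Nat.add_sub_cancel] at h
    rw [h]

end Aux

/-- Corollary 5.2: an odd-even Hecke operator of super rank `(m,n)` (so that
`P_Λ(X)·∏_j(1−u_jX) = ∏_i(1+t_iX)` with `t_i, u_j > 0`, `∏ t_i = ∏ u_j = 1`)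
satisfies `m + n ≤ dim V`; moreover if equality holds then all `t_i = 1`, all
`u_j = 1`, and `λ_k = Σ_{a+b=k} C(m,a)·C(n+b−1,b)` (i.e. `P_Λ(t) = (1+t)^m(1−t)^{−n}`). -/

theorem odd_even_hecke_superrank_le_dim
    (K : Type*) [Field K] [CharZero K] (V : Type*) [AddCommGroup V] [Module K V]
    [FiniteDimensional K V] (q : K) (hq : q ≠ 0)
    (R : V ⊗[K] V →ₗ[K] V ⊗[K] V) (hR : IsHecke K V q R)
    (m n : ℕ) (t : Fin m → ℝ) (u : Fin n → ℝ)
    (ht : ∀ i, 0 < t i) (hu : ∀ j, 0 < u j)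
    (htprod : ∏ i, t i = 1) (huprod : ∏ j, u j = 1)
    (hPS : (PowerSeries.mk fun k => (lambdaDim K V R k : ℝ)) *
          ∏ j, (1 - PowerSeries.C (u j) * PowerSeries.X) =
        ∏ i, (1 + PowerSeries.C (t i) * PowerSeries.X)) :
    m + n ≤ Module.finrank K V ∧
      (m + n = Module.finrank K V →
        (∀ i, t i = 1) ∧ (∀ j, u j = 1) ∧
          ∀ k, lambdaDim K V R k =
            ∑ p ∈ Finset.HasAntidiagonal.antidiagonal k, m.choose p.1 * (n + p.2 - 1).choose p.2) := by

  classical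
  have hprodeq : (∏ j, (1 + PowerSeries.C (-u j) * PowerSeries.X))
      = ∏ j, (1 - PowerSeries.C (u j) * PowerSeries.X) :=
    Finset.prod_congr rfl fun j _ => by rw [map_neg, neg_mul, sub_eq_add_neg]
  have hPS' : (PowerSeries.mk fun k => (lambdaDim K V R k : ℝ)) *
        ∏ j, (1 + PowerSeries.C (-u j) * PowerSeries.X) =
      ∏ i, (1 + PowerSeries.C (t i) * PowerSeries.X) := by
    rw [hprodeq]; exact hPS
  have h0 : (lambdaDim K V R 0 : ℝ) = 1 := by
    have hc := congrArg (PowerSeries.constantCoeff) hPS'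
    rw [map_mul, auxC0, auxC0, PowerSeries.constantCoeff_mk, mul_one] at hc
    exact hc
  have hneg : (∑ j, -u j) = -∑ j, u j := by rw [Finset.sum_neg_distrib]
  have h1 : (lambdaDim K V R 1 : ℝ) = (∑ i, t i) + ∑ j, u j := by
    have hc := congrArg (PowerSeries.coeff 1) hPS'
    rw [PowerSeries.coeff_one_mul, auxC1, auxC1, PowerSeries.coeff_mk,
      PowerSeries.constantCoeff_mk] at hc
    rw [h0, auxC0, hneg] at hc
    linarith
  have hle : lambdaDim K V R 1 ≤ Module.finrank K V := by
    unfold lambdaDim quadDim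
    rw [pow_one]
    exact le_trans (Submodule.finrank_map_le _ _) (LinearMap.finrank_range_le _)
  obtain ⟨htge, hteq⟩ := auxAMGM t ht htprod
  obtain ⟨huge, hueq⟩ := auxAMGM u hu huprod
  have hleR : (lambdaDim K V R 1 : ℝ) ≤ (Module.finrank K V : ℝ) := by exact_mod_cast hle
  have hmain : (m : ℝ) + n ≤ (Module.finrank K V : ℝ) := by linarith
  constructor
  · exact_mod_cast hmain
  · intro heq
    have heqR : (Module.finrank K V : ℝ) = (m : ℝ) + n := by
      rw [← heq]; push_cast; ring
    have hts : ∑ i, t i = m := by linarith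
    have hus : ∑ j, u j = n := by linarith
    have ht1 := hteq hts
    have hu1 := hueq hus
    refine ⟨ht1, hu1, ?_⟩
    have hL : (∏ j : Fin n, (1 - PowerSeries.C (u j) * PowerSeries.X))
        = (1 - PowerSeries.X) ^ n := by
      calc (∏ j : Fin n, (1 - PowerSeries.C (u j) * PowerSeries.X))
          = ∏ _j : Fin n, (1 - PowerSeries.X) :=
            Finset.prod_congr rfl fun j _ => by rw [hu1 j, map_one, one_mul]
        _ = (1 - PowerSeries.X) ^ n := by
            rw [Finset.prod_const, Finset.card_univ, Fintype.card_fin]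
    have hRt : (∏ i : Fin m, (1 + PowerSeries.C (t i) * PowerSeries.X))
        = (1 + PowerSeries.X) ^ m := by
      calc (∏ i : Fin m, (1 + PowerSeries.C (t i) * PowerSeries.X))
          = ∏ _i : Fin m, (1 + PowerSeries.X) :=
            Finset.prod_congr rfl fun i _ => by rw [ht1 i, map_one, one_mul]
        _ = (1 + PowerSeries.X) ^ m := by
            rw [Finset.prod_const, Finset.card_univ, Fintype.card_fin]
    have h2 : (PowerSeries.mk fun k => (lambdaDim K V R k : ℝ)) *
        (1 - PowerSeries.X) ^ n = (1 + PowerSeries.X) ^ m := by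
      rw [← hL, ← hRt]; exact hPS
    have h3 : ((1 - PowerSeries.X : PowerSeries ℝ) ^ n) *
        (PowerSeries.invOneSubPow ℝ n).val = 1 := by
      rw [← PowerSeries.invOneSubPow_inv_eq_one_sub_pow]
      exact (PowerSeries.invOneSubPow ℝ n).inv_val
    have hP : (PowerSeries.mk fun k => (lambdaDim K V R k : ℝ))
        = (1 + PowerSeries.X) ^ m * (PowerSeries.invOneSubPow ℝ n).val := by
      calc (PowerSeries.mk fun k => (lambdaDim K V R k : ℝ))
          = (PowerSeries.mk fun k => (lambdaDim K V R k : ℝ)) *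
              (((1 - PowerSeries.X) ^ n) * (PowerSeries.invOneSubPow ℝ n).val) := by
            rw [h3, mul_one]
        _ = ((PowerSeries.mk fun k => (lambdaDim K V R k : ℝ)) *
              (1 - PowerSeries.X) ^ n) * (PowerSeries.invOneSubPow ℝ n).val := by ring
        _ = (1 + PowerSeries.X) ^ m * (PowerSeries.invOneSubPow ℝ n).val := by rw [h2]
    intro k
    have hco := congrArg (PowerSeries.coeff k) hP
    rw [PowerSeries.coeff_mk, PowerSeries.coeff_mul] at hco
    have hfin : (lambdaDim K V R k : ℝ) = ∑ p ∈ Finset.HasAntidiagonal.antidiagonal k,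
        ((m.choose p.1 : ℝ) * ((n + p.2 - 1).choose p.2 : ℝ)) := by
      rw [hco]
      exact Finset.sum_congr rfl fun p _ => by rw [auxBinom, auxInv]
    exact_mod_cast hfin
end

section
/- Let γ > 0 be real, let m, n ∈ ℕ, and let t_1, …, t_m and u_1, …, u_n be nonnegative reals. Let (a_k)_{k≥0} be the coefficient sequence of the formal power series exp(γX) · ∏_{i=1}^{m}(1 + t_i X) · ∏_{j=1}^{n}(1 − u_j X)^{−1} ∈ ℝ[[X]] (the inverse exists since the constant term is 1). Then (a_k) is a PP-sequence. (Lemma 3.4, case γ > 0) -/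
/-- Extension of a sequence by `0` on negative indices. -/
noncomputable def seqExt (a : ℕ → ℝ) (k : ℤ) : ℝ := if 0 ≤ k then a k.toNat else 0

/-- A sequence is totally positive (a Pólya frequency sequence) if every minor of the
associated infinite Toeplitz matrix `‖a_{i−j}‖` is nonnegative. -/
def IsTotallyPositive (a : ℕ → ℝ) : Prop :=
  ∀ r : ℕ, 0 < r → ∀ i j : Fin r → ℕ, StrictMono i → StrictMono j →
    0 ≤ (Matrix.of fun s t => seqExt a ((i s : ℤ) - (j t : ℤ))).det

/-- A PP-sequence: a totally positive sequence all of whose minors with `j_s ≤ i_s`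
for all `s` are strictly positive. -/
def IsPP (a : ℕ → ℝ) : Prop :=
  IsTotallyPositive a ∧
    ∀ r : ℕ, 0 < r → ∀ i j : Fin r → ℕ, StrictMono i → StrictMono j →
      (∀ s, j s ≤ i s) →
      0 < (Matrix.of fun s t => seqExt a ((i s : ℤ) - (j t : ℤ))).det


open Finset Matrix in
section
namespace PFAux

lemma seqExt_coe (a : ℕ → ℝ) (k : ℕ) : seqExt a k = a k := by simp [seqExt]

lemma seqExt_neg (a : ℕ → ℝ) {k : ℤ} (h : k < 0) : seqExt a k = 0 := by
  simp [seqExt, not_le.2 h]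

lemma seqExt_eq (a : ℕ → ℝ) (x y : ℕ) :
    seqExt a ((x : ℤ) - y) = if y ≤ x then a (x - y) else 0 := by
  rcases le_or_gt y x with h | h
  · rw [if_pos h, show (x : ℤ) - y = ((x - y : ℕ) : ℤ) by omega, seqExt_coe]
  · rw [if_neg (not_le.2 h), seqExt_neg _ (by omega)]

/-- A strictly monotone permutation of `Fin r` is the identity. -/
lemma perm_eq_one_of_strictMono {r : ℕ} (σ : Equiv.Perm (Fin r)) (h : StrictMono σ) :
    σ = 1 := by
  ext x
  let e : Fin r ≃o Fin r := { toEquiv := σ, map_rel_iff' := fun {a b} => h.le_iff_le }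
  have h2 : e x = x := by rw [Subsingleton.elim e (OrderIso.refl (Fin r))]; rfl
  have h3 : σ x = x := h2
  simp [h3]

/-- The Toeplitz minor matrix associated to a sequence. -/
noncomputable def toep (a : ℕ → ℝ) {r : ℕ} (i j : Fin r → ℕ) : Matrix (Fin r) (Fin r) ℝ :=
  Matrix.of fun s t => seqExt a ((i s : ℤ) - (j t : ℤ))

/-- Determinant of a Toeplitz minor of a sequence supported on `{0,1}`: only the identity
permutation contributes. -/
lemma det_toep_banded (f : ℕ → ℝ) (hf : ∀ k, 2 ≤ k → f k = 0) {r : ℕ}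
    (i j : Fin r → ℕ) (hi : StrictMono i) (hj : StrictMono j) :
    (toep f i j).det = ∏ s, seqExt f ((i s : ℤ) - (j s : ℤ)) := by
  rw [Matrix.det_apply']
  rw [Finset.sum_eq_single 1]
  · simp [toep]
  · intro σ _ hσ
    by_contra hne
    have hprod : ∀ s, toep f i j (σ s) s ≠ 0 := by
      intro s hs
      exact hne (mul_eq_zero_of_right _ (Finset.prod_eq_zero (Finset.mem_univ s) hs))
    -- each nonzero entry forces i (σ s) - j s ∈ {0,1}
    have hd : ∀ s, (0 : ℤ) ≤ (i (σ s) : ℤ) - j s ∧ (i (σ s) : ℤ) - j s ≤ 1 := by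
      intro s
      have h1 := hprod s
      constructor
      · by_contra hlt
        exact h1 (seqExt_neg f (not_le.1 hlt))
      · by_contra hgt
        push_neg at hgt
        have h2 : (0:ℤ) ≤ (i (σ s) : ℤ) - j s := by
          by_contra hlt
          exact h1 (seqExt_neg f (not_le.1 hlt))
        have : seqExt f ((i (σ s) : ℤ) - j s) = f ((i (σ s) : ℤ) - j s).toNat := by
          unfold seqExt; rw [if_pos h2]
        apply h1
        rw [show toep f i j (σ s) s = seqExt f ((i (σ s) : ℤ) - j s) from rfl, this]
        apply hf
        omega
    -- σ is strictly monotone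
    have hsm : StrictMono σ := by
      intro s s' hss
      by_contra hle
      push_neg at hle
      have hlt : σ s' < σ s := lt_of_le_of_ne hle (fun hc => absurd (σ.injective hc.symm) (ne_of_lt hss))
      have hA : i (σ s') < i (σ s) := hi hlt
      have hB : j s < j s' := hj hss
      have h1 := hd s
      have h2 := hd s'
      omega
    exact hσ (perm_eq_one_of_strictMono σ hsm)
  · intro h; exact absurd (Finset.mem_univ 1) h

/-- The finset of strictly monotone maps `Fin r → Fin N`. -/
noncomputable def monoMaps (r N : ℕ) : Finset (Fin r → Fin N) :=
  @Finset.filter _ StrictMono (Classical.decPred _) Finset.univ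

lemma mem_monoMaps {r N : ℕ} {k : Fin r → Fin N} : k ∈ monoMaps r N ↔ StrictMono k := by
  simp [monoMaps]

/-- Cauchy–Binet formula. -/
theorem cauchyBinet {r N : ℕ} (A : Matrix (Fin r) (Fin N) ℝ) (B : Matrix (Fin N) (Fin r) ℝ) :
    (A * B).det = ∑ k ∈ monoMaps r N, (A.submatrix id k).det * (B.submatrix k id).det := by
  classical
  have hrows : (Matrix.of fun s => ∑ l ∈ Finset.univ, A s l • B l) = A * B := by
    ext s t
    simp [Matrix.mul_apply]
  have h1 : (A * B).det
      = ∑ p ∈ Fintype.piFinset (fun _ : Fin r => (Finset.univ : Finset (Fin N))),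
          (Matrix.of fun s => A s (p s) • B (p s)).det := by
    rw [← hrows]
    exact (Matrix.detRowAlternating.toMultilinearMap.map_sum_finset
      (fun s l => A s l • B l) (fun _ => Finset.univ))
  have h2 : ∀ p : Fin r → Fin N,
      (Matrix.of fun s => A s (p s) • B (p s)).det
        = (∏ s, A s (p s)) * (B.submatrix p id).det := by
    intro p
    have := Matrix.detRowAlternating.toMultilinearMap.map_smul_univ
      (fun s => A s (p s)) (fun s => B (p s))
    simp only [smul_eq_mul] at this; exact this
  rw [h1]
  simp_rw [h2, Fintype.piFinset_univ]
  -- split off non-injective terms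
  rw [← Finset.sum_filter_add_sum_filter_not Finset.univ Function.Injective]
  have hnoninj : ∑ p ∈ Finset.univ.filter (fun p => ¬ Function.Injective p),
      (∏ s, A s (p s)) * (B.submatrix p id).det = 0 := by
    apply Finset.sum_eq_zero
    intro p hp
    rw [Finset.mem_filter] at hp
    obtain ⟨s, s', hps, hss⟩ := Function.not_injective_iff.1 hp.2
    have : (B.submatrix p id).det = 0 := by
      apply Matrix.det_zero_of_row_eq hss
      ext t
      simp [Matrix.submatrix_apply, hps]
    rw [this, mul_zero]
  rw [hnoninj, add_zero]
  -- bijection with pairs (strictly monotone map, permutation)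
  have hbij : ∑ p ∈ Finset.univ.filter Function.Injective,
      (∏ s, A s (p s)) * (B.submatrix p id).det
      = ∑ a ∈ (monoMaps r N) ×ˢ (Finset.univ : Finset (Equiv.Perm (Fin r))),
          (∏ s, A s ((a.1 ∘ a.2) s)) * (B.submatrix (a.1 ∘ a.2) id).det := by
    refine Finset.sum_nbij' (fun p => (p ∘ Tuple.sort p, (Tuple.sort p)⁻¹))
      (fun a => a.1 ∘ a.2) ?_ ?_ ?_ ?_ ?_
    · -- maps into product
      intro p hp
      rw [Finset.mem_filter] at hp
      rw [Finset.mem_product]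
      refine ⟨mem_monoMaps.2 ?_, Finset.mem_univ _⟩
      have hmono : Monotone (p ∘ Tuple.sort p) := Tuple.monotone_sort p
      have hinj : Function.Injective (p ∘ Tuple.sort p) :=
        hp.2.comp (Tuple.sort p).injective
      exact hmono.strictMono_of_injective hinj
    · -- maps back
      intro a ha
      rw [Finset.mem_product] at ha
      rw [Finset.mem_filter]
      exact ⟨Finset.mem_univ _, (mem_monoMaps.1 ha.1).injective.comp a.2.injective⟩
    · -- left inverse
      intro p hp
      funext x
      simp
    · -- right inverse
      intro a ha
      rw [Finset.mem_product] at ha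
      obtain ⟨hk, -⟩ := ha
      have hk' := mem_monoMaps.1 hk
      set k := a.1
      set σ := a.2
      have hπ : Tuple.sort (k ∘ σ) = σ⁻¹ := by
        have hmono : Monotone ((k ∘ σ) ∘ Tuple.sort (k ∘ σ)) := Tuple.monotone_sort _
        have hinj : Function.Injective ((k ∘ σ) ∘ Tuple.sort (k ∘ σ)) :=
          (hk'.injective.comp σ.injective).comp (Tuple.sort (k ∘ σ)).injective
      -- `(k ∘ σ) ∘ sort = k ∘ (σ * sort)`; strict mono
        have hsm : StrictMono ((k ∘ σ) ∘ Tuple.sort (k ∘ σ)) :=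
          hmono.strictMono_of_injective hinj
        have hπsm : StrictMono (σ * Tuple.sort (k ∘ σ) : Equiv.Perm (Fin r)) := by
          intro x y hxy
          have : k ((σ * Tuple.sort (k ∘ σ)) x) < k ((σ * Tuple.sort (k ∘ σ)) y) := hsm hxy
          exact hk'.lt_iff_lt.1 this
        have := perm_eq_one_of_strictMono _ hπsm
        have h4 : σ * Tuple.sort (k ∘ σ) = 1 := this
        calc Tuple.sort (k ∘ σ) = σ⁻¹ * (σ * Tuple.sort (k ∘ σ)) := by group
          _ = σ⁻¹ := by rw [h4]; group
      have : (k ∘ σ) ∘ Tuple.sort (k ∘ σ) = k := by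
        rw [hπ]
        funext x
        simp
      rw [Prod.ext_iff]
      constructor
      · exact this
      · simp [hπ]; rfl
    · intro p hp
      dsimp only
      rw [show (p ∘ ⇑(Tuple.sort p)) ∘ ⇑(Tuple.sort p)⁻¹ = p from funext fun x => by simp]
  rw [hbij, Finset.sum_product]
  refine Finset.sum_congr rfl fun k hk => ?_
  -- inner sum over permutations
  have hinner : ∀ σ : Equiv.Perm (Fin r),
      (∏ s, A s ((k ∘ σ) s)) * (B.submatrix (k ∘ σ) id).det
        = ((Equiv.Perm.sign σ : ℝ) * ∏ s, A s (k (σ s))) * (B.submatrix k id).det := by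
    intro σ
    have : B.submatrix (k ∘ σ) id = (B.submatrix k id).submatrix σ id := by
      ext s t; simp
    rw [this, Matrix.det_permute]
    push_cast
    simp only [Function.comp_apply]
    ring
  simp_rw [hinner]
  rw [← Finset.sum_mul]
  congr 1
  have : (A.submatrix id k).det = ((A.submatrix id k)ᵀ).det := (Matrix.det_transpose _).symm
  rw [this, Matrix.det_apply']
  refine Finset.sum_congr rfl fun σ _ => ?_
  simp [Matrix.transpose_apply, Matrix.submatrix_apply]

/-- Convolution (Cauchy product) of sequences. -/
noncomputable def conv (a b : ℕ → ℝ) : ℕ → ℝ :=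
  fun k => ∑ p ∈ Finset.range (k + 1), a p * b (k - p)

lemma toep_conv_entry (a b : ℕ → ℝ) (I J N : ℕ) (hN : I < N) :
    seqExt (conv a b) ((I : ℤ) - J) =
      ∑ l : Fin N, seqExt a ((I : ℤ) - l) * seqExt b ((l : ℤ) - J) := by
  have hterm : ∀ l : Fin N,
      seqExt a ((I : ℤ) - l) * seqExt b ((l : ℤ) - J)
        = (if (l : ℕ) ≤ I then a (I - l) else 0) * (if J ≤ (l : ℕ) then b (l - J) else 0) := by
    intro l
    rw [seqExt_eq, seqExt_eq]
  simp_rw [hterm]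
  rcases le_or_gt J I with h | h
  · rw [seqExt_eq, if_pos h]
    -- restrict sum to Icc J I
    rw [Fin.sum_univ_eq_sum_range (fun l =>
      (if l ≤ I then a (I - l) else 0) * (if J ≤ l then b (l - J) else 0)) N]
    rw [show Finset.range N = Finset.range N from rfl]
    have hsub : Finset.Icc J I ⊆ Finset.range N := by
      intro l hl
      rw [Finset.mem_Icc] at hl
      rw [Finset.mem_range]
      omega
    rw [← Finset.sum_subset hsub (fun l _ hl => by
        rw [Finset.mem_Icc] at hl
        by_cases hJ : J ≤ l
        · have hI : ¬ l ≤ I := fun h' => hl ⟨hJ, h'⟩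
          rw [if_neg hI, zero_mul]
        · rw [if_neg hJ, mul_zero])]
    have hval : ∀ l ∈ Finset.Icc J I,
        (if l ≤ I then a (I - l) else 0) * (if J ≤ l then b (l - J) else 0)
          = a (I - l) * b (l - J) := by
      intro l hl
      rw [Finset.mem_Icc] at hl
      rw [if_pos hl.2, if_pos hl.1]
    rw [Finset.sum_congr rfl hval]
    -- now reindex
    unfold conv
    refine Finset.sum_nbij' (fun p => I - p) (fun l => I - l) ?_ ?_ ?_ ?_ ?_
    · intro p hp
      rw [Finset.mem_range] at hp
      rw [Finset.mem_Icc]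
      omega
    · intro l hl
      rw [Finset.mem_Icc] at hl
      rw [Finset.mem_range]
      omega
    · intro p hp
      rw [Finset.mem_range] at hp
      omega
    · intro l hl
      rw [Finset.mem_Icc] at hl
      omega
    · intro p hp
      rw [Finset.mem_range] at hp
      rw [show I - (I - p) = p by omega, show I - p - J = I - J - p by omega]
  · rw [seqExt_neg _ (by omega)]
    symm
    apply Finset.sum_eq_zero
    intro l _
    by_cases hJ : J ≤ (l : ℕ)
    · rw [if_neg (by omega : ¬ (l : ℕ) ≤ I), zero_mul]
    · rw [if_neg hJ, mul_zero]

lemma toep_conv_factor (a b : ℕ → ℝ) {r N : ℕ} (i j : Fin r → ℕ) (hN : ∀ s, i s < N) :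
    toep (conv a b) i j =
      (Matrix.of fun (s : Fin r) (l : Fin N) => seqExt a ((i s : ℤ) - l)) *
      (Matrix.of fun (l : Fin N) (t : Fin r) => seqExt b ((l : ℤ) - j t)) := by
  ext s t
  rw [Matrix.mul_apply]
  exact toep_conv_entry a b (i s) (j t) N (hN s)

lemma isTP_iff (a : ℕ → ℝ) : IsTotallyPositive a ↔
    ∀ r : ℕ, ∀ i j : Fin r → ℕ, StrictMono i → StrictMono j → 0 ≤ (toep a i j).det := by
  constructor
  · intro h r i j hi hj
    rcases Nat.eq_zero_or_pos r with hr | hr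
    · subst hr
      rw [Matrix.det_fin_zero]
      norm_num
    · exact h r hr i j hi hj
  · intro h r _ i j hi hj
    exact h r i j hi hj

lemma isTP_conv {a b : ℕ → ℝ} (ha : IsTotallyPositive a) (hb : IsTotallyPositive b) :
    IsTotallyPositive (conv a b) := by
  rw [isTP_iff] at ha hb ⊢
  intro r i j hi hj
  set N : ℕ := (Finset.univ.sup i) + 1 with hNdef
  have hN : ∀ s, i s < N := fun s => Nat.lt_succ_of_le (Finset.le_sup (Finset.mem_univ s))
  rw [show toep (conv a b) i j = _ from toep_conv_factor a b i j hN, cauchyBinet]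
  apply Finset.sum_nonneg
  intro k hk
  have hk' : StrictMono k := mem_monoMaps.1 hk
  have h1 : 0 ≤ (toep a i (fun t => (k t : ℕ))).det :=
    ha r i _ hi (fun x y hxy => by exact_mod_cast hk' hxy)
  have h2 : 0 ≤ (toep b (fun t => (k t : ℕ)) j).det :=
    hb r _ j (fun x y hxy => by exact_mod_cast hk' hxy) hj
  exact mul_nonneg h1 h2

lemma isTP_congr {a b : ℕ → ℝ} (h : ∀ k, a k = b k) (hb : IsTotallyPositive b) :
    IsTotallyPositive a := by
  have : a = b := funext h
  rwa [this]

lemma seqExt_nonneg {f : ℕ → ℝ} (h : ∀ k, 0 ≤ f k) (d : ℤ) : 0 ≤ seqExt f d := by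
  unfold seqExt
  split
  · exact h _
  · exact le_refl 0

lemma isTP_of_support01 (f : ℕ → ℝ) (h0 : ∀ k, 0 ≤ f k) (hf : ∀ k, 2 ≤ k → f k = 0) :
    IsTotallyPositive f := by
  intro r _ i j hi hj
  rw [show (Matrix.of fun s t => seqExt f ((i s : ℤ) - (j t : ℤ))) = toep f i j from rfl,
    det_toep_banded f hf i j hi hj]
  exact Finset.prod_nonneg fun s _ => seqExt_nonneg h0 _

/-- Total positivity of the geometric sequence. -/
lemma det_toep_geom_nonneg (u : ℝ) (hu : 0 ≤ u) :
    ∀ r : ℕ, ∀ i j : Fin r → ℕ, StrictMono i → StrictMono j →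
      0 ≤ (toep (fun k => u ^ k) i j).det := by
  intro r
  induction r with
  | zero => intro i j _ _; rw [Matrix.det_fin_zero]; norm_num
  | succ r ih =>
    intro i j hi hj
    have hnn : ∀ d : ℤ, 0 ≤ seqExt (fun k => u ^ k) d :=
      seqExt_nonneg (fun k => pow_nonneg hu k)
    rcases Nat.eq_zero_or_pos r with hr0 | hr0
    · subst hr0
      rw [Matrix.det_fin_one]
      exact hnn _
    · set t1 : Fin (r+1) := ⟨1, by omega⟩ with ht1
      have h0t1 : (0 : Fin (r+1)) < t1 := by
        rw [Fin.lt_def]; simp [ht1]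
      set M := toep (fun k => u ^ k) i j with hM
      by_cases hcase : j t1 ≤ i 0
      · -- columns 0 and t1 are proportional
        have hj01 : j 0 < j t1 := hj h0t1
        have hcol : ∀ s, M s 0 = u ^ (j t1 - j 0) * M s t1 := by
          intro s
          have hs1 : j t1 ≤ i s := le_trans hcase (hi.le_iff_le.2 (Fin.zero_le s))
          have hs0 : j 0 ≤ i s := by omega
          have e0 : M s 0 = u ^ (i s - j 0) := by
            rw [hM, show toep (fun k => u^k) i j s 0
                = seqExt (fun k => u^k) ((i s : ℤ) - j 0) from rfl, seqExt_eq, if_pos hs0]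
          have e1 : M s t1 = u ^ (i s - j t1) := by
            rw [hM, show toep (fun k => u^k) i j s t1
                = seqExt (fun k => u^k) ((i s : ℤ) - j t1) from rfl, seqExt_eq, if_pos hs1]
          rw [e0, e1, ← pow_add]
          congr 1
          omega
        have hdet : M.det = 0 := by
          have h0ne : (0 : Fin (r+1)) ≠ t1 := ne_of_lt h0t1
          have hM0 : M = M.updateCol 0 (fun s => u ^ (j t1 - j 0) * M s t1) := by
            ext s t
            by_cases ht : t = 0
            · subst ht
              rw [Matrix.updateCol_self]
              exact hcol s
            · rw [Matrix.updateCol_ne ht]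
          rw [hM0]
          have hsmul : (fun s => u ^ (j t1 - j 0) * M s t1)
              = (u ^ (j t1 - j 0)) • (fun s => M s t1) := by
            funext s; simp [smul_eq_mul]
          rw [hsmul, Matrix.det_updateCol_smul]
          rw [Matrix.det_zero_of_column_eq h0ne (by
            intro s
            rw [Matrix.updateCol_self, Matrix.updateCol_ne h0ne.symm])]
          ring
        rw [hdet]
      · -- first row is (M00, 0, ..., 0)
        push_neg at hcase
        have hrow : ∀ t : Fin (r+1), t ≠ 0 → M 0 t = 0 := by
          intro t ht
          have ht1t : t1 ≤ t := by
            rw [Fin.le_def]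
            have : (t : ℕ) ≠ 0 := fun hc => ht (Fin.ext hc)
            simp [ht1]
            omega
          have hjt : j t1 ≤ j t := hj.le_iff_le.2 ht1t
          rw [hM, show toep (fun k => u^k) i j 0 t
              = seqExt (fun k => u^k) ((i 0 : ℤ) - j t) from rfl, seqExt_eq,
            if_neg (by omega)]
        rw [Matrix.det_succ_row_zero]
        rw [Finset.sum_eq_single 0]
        · have hsub : M.submatrix Fin.succ (Fin.succAbove 0)
              = toep (fun k => u ^ k) (i ∘ Fin.succ) (j ∘ Fin.succ) := by
            rw [Fin.succAbove_zero]
            rfl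
          rw [hsub]
          have hpos := ih (i ∘ Fin.succ) (j ∘ Fin.succ)
            (hi.comp Fin.strictMono_succ) (hj.comp Fin.strictMono_succ)
          have h00 : 0 ≤ M 0 0 := hnn _
          simp only [Fin.val_zero, pow_zero, one_mul]
          exact mul_nonneg h00 hpos
        · intro t _ ht
          rw [hrow t ht, mul_zero, zero_mul]
        · intro h
          exact absurd (Finset.mem_univ 0) h

/-- Determinant of a "diagonal" Toeplitz minor (same row and column indices). -/
lemma det_toep_diag (c : ℕ → ℝ) {r : ℕ} (j : Fin r → ℕ) (hj : StrictMono j) :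
    (toep c j j).det = (c 0) ^ r := by
  have htri : (toep c j j).BlockTriangular OrderDual.toDual := by
    intro s t hst
    have : s < t := hst
    exact seqExt_neg c (by
      have := hj this
      omega)
  rw [Matrix.det_of_lowerTriangular _ htri]
  have : ∀ s : Fin r, toep c j j s s = c 0 := by
    intro s
    rw [show toep c j j s s = seqExt c ((j s : ℤ) - j s) from rfl, sub_self,
      show (0 : ℤ) = ((0 : ℕ) : ℤ) from rfl, seqExt_coe]
  rw [Finset.prod_congr rfl (fun s _ => this s)]
  simp

/-- The binomial-coefficient matrix. -/
noncomputable def chM {r : ℕ} (i j : Fin r → ℕ) : Matrix (Fin r) (Fin r) ℝ :=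
  Matrix.of fun s t => (Nat.choose (i s) (j t) : ℝ)

/-- The `{0,1}`-bump sequence. -/
noncomputable def bump : ℕ → ℝ := fun k => if k ≤ 1 then 1 else 0

lemma bump_eventually_zero : ∀ k, 2 ≤ k → bump k = 0 := by
  intro k hk
  simp [bump]
  omega

lemma seqExt_bump_nonneg (d : ℤ) : 0 ≤ seqExt bump d := by
  apply seqExt_nonneg
  intro k
  unfold bump
  split <;> norm_num

/-- Pascal-recursion entry identity:
`choose I J = ∑_l choose (I-1) l * bump (J - l)` for `I ≥ 1`. -/
lemma choose_entry_identity (I J N : ℕ) (hI : 1 ≤ I) (hJ : J < N) :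
    (Nat.choose I J : ℝ)
      = ∑ l : Fin N, (Nat.choose (I - 1) (l : ℕ) : ℝ) * seqExt bump ((J : ℤ) - l) := by
  have hterm : ∀ l : Fin N,
      (Nat.choose (I - 1) (l : ℕ) : ℝ) * seqExt bump ((J : ℤ) - l)
        = (if (l : ℕ) = J then (Nat.choose (I-1) J : ℝ) else 0)
          + (if 1 ≤ J ∧ (l : ℕ) = J - 1 then (Nat.choose (I-1) (J-1) : ℝ) else 0) := by
    intro l
    rw [seqExt_eq]
    by_cases h1 : (l : ℕ) = J
    · rw [if_pos h1, if_pos (by omega), if_neg (by omega), add_zero, h1]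
      simp [bump]
    · by_cases h2 : 1 ≤ J ∧ (l : ℕ) = J - 1
      · rw [if_pos h2, if_neg h1, zero_add, if_pos (by omega), h2.2]
        have : J - (J - 1) = 1 := by omega
        rw [this]
        simp [bump]
      · rw [if_neg h1, if_neg h2, add_zero]
        by_cases h3 : (l : ℕ) ≤ J
        · rw [if_pos h3]
          have : 2 ≤ J - (l : ℕ) := by omega
          rw [bump_eventually_zero _ this, mul_zero]
        · rw [if_neg h3, mul_zero]
  rw [Finset.sum_congr rfl (fun l _ => hterm l), Finset.sum_add_distrib]
  have e1 : ∑ l : Fin N, (if (l : ℕ) = J then (Nat.choose (I-1) J : ℝ) else 0)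
      = (Nat.choose (I-1) J : ℝ) := by
    rw [Finset.sum_eq_single (⟨J, hJ⟩ : Fin N)]
    · simp
    · intro l _ hl
      rw [if_neg (fun hc => hl (Fin.ext hc))]
    · intro h; exact absurd (Finset.mem_univ _) h
  rw [e1]
  by_cases hJ1 : 1 ≤ J
  · have e2 : ∑ l : Fin N, (if 1 ≤ J ∧ (l : ℕ) = J - 1 then (Nat.choose (I-1) (J-1) : ℝ) else 0)
        = (Nat.choose (I-1) (J-1) : ℝ) := by
      rw [Finset.sum_eq_single (⟨J - 1, by omega⟩ : Fin N)]
      · rw [if_pos ⟨hJ1, rfl⟩]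
      · intro l _ hl
        rw [if_neg (fun hc => hl (Fin.ext hc.2))]
      · intro h; exact absurd (Finset.mem_univ _) h
    rw [e2]
    -- Pascal
    obtain ⟨I', rfl⟩ : ∃ I', I = I' + 1 := ⟨I - 1, by omega⟩
    obtain ⟨J', rfl⟩ : ∃ J', J = J' + 1 := ⟨J - 1, by omega⟩
    simp only [Nat.add_sub_cancel]
    rw [Nat.choose_succ_succ I' J']
    push_cast
    ring
  · have hJ0 : J = 0 := by omega
    subst hJ0
    have e2 : ∑ l : Fin N, (if 1 ≤ (0:ℕ) ∧ (l : ℕ) = 0 - 1 then (Nat.choose (I-1) (0-1) : ℝ) else 0)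
        = 0 := by
      apply Finset.sum_eq_zero
      intro l _
      rw [if_neg (by omega)]
    rw [e2, add_zero]
    simp

lemma chM_factor {r N : ℕ} (i j : Fin r → ℕ) (hi1 : ∀ s, 1 ≤ i s) (hjN : ∀ t, j t < N) :
    chM i j = (Matrix.of fun (s : Fin r) (l : Fin N) => (Nat.choose (i s - 1) (l : ℕ) : ℝ)) *
              (Matrix.of fun (l : Fin N) (t : Fin r) => seqExt bump ((j t : ℤ) - l)) := by
  ext s t
  rw [Matrix.mul_apply]
  exact choose_entry_identity (i s) (j t) N (hi1 s) (hjN t)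

lemma det_toep_banded_transpose {r N : ℕ} (j : Fin r → ℕ) (k : Fin r → Fin N)
    (hj : StrictMono j) (hk : StrictMono k) :
    ((Matrix.of fun (l : Fin N) (t : Fin r) => seqExt bump ((j t : ℤ) - l)).submatrix k id).det
      = ∏ s, seqExt bump ((j s : ℤ) - (k s : ℕ)) := by
  have : ((Matrix.of fun (l : Fin N) (t : Fin r) => seqExt bump ((j t : ℤ) - l)).submatrix k id)
      = (toep bump j (fun t => (k t : ℕ)))ᵀ := by
    ext s t
    rfl
  rw [this, Matrix.det_transpose]
  exact det_toep_banded bump bump_eventually_zero j _ hj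
    (fun a b hab => by exact_mod_cast hk hab)

lemma detCh_nonneg_aux : ∀ n : ℕ, ∀ r : ℕ, ∀ i j : Fin r → ℕ, r + ∑ s, i s ≤ n →
    StrictMono i → StrictMono j → 0 ≤ (chM i j).det := by
  intro n
  induction n using Nat.strong_induction_on with
  | _ n IH =>
    intro r i j hn hi hj
    match r with
    | 0 => rw [Matrix.det_fin_zero]; norm_num
    | (r' + 1) =>
      by_cases hi0 : i 0 = 0
      · -- expand along the first row
        rw [Matrix.det_succ_row_zero, Finset.sum_eq_single 0]
        · have hsub : (chM i j).submatrix Fin.succ (Fin.succAbove 0)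
              = chM (i ∘ Fin.succ) (j ∘ Fin.succ) := by
            rw [Fin.succAbove_zero]; rfl
          rw [hsub]
          have hm : r' + ∑ s, (i ∘ Fin.succ) s < n := by
            have h2 : ∑ s : Fin (r'+1), i s = i 0 + ∑ s : Fin r', (i ∘ Fin.succ) s := by
              simpa [Function.comp] using Fin.sum_univ_succ i
            omega
          have hpos := IH _ hm r' (i ∘ Fin.succ) (j ∘ Fin.succ) (le_refl _)
            (hi.comp Fin.strictMono_succ) (hj.comp Fin.strictMono_succ)
          have h00 : (0 : ℝ) ≤ chM i j 0 0 := by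
            rw [show chM i j 0 0 = (Nat.choose (i 0) (j 0) : ℝ) from rfl]
            positivity
          simp only [Fin.val_zero, pow_zero, one_mul]
          exact mul_nonneg h00 hpos
        · intro t _ ht
          have hjt : 0 < j t := by
            have : j 0 < j t := hj (Fin.pos_iff_ne_zero.2 ht)
            omega
          have : chM i j 0 t = 0 := by
            rw [show chM i j 0 t = (Nat.choose (i 0) (j t) : ℝ) from rfl, hi0,
              Nat.choose_eq_zero_of_lt hjt]
            simp
          rw [this, mul_zero, zero_mul]
        · intro h; exact absurd (Finset.mem_univ _) h
      · -- Pascal step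
        have hi1 : ∀ s, 1 ≤ i s := by
          intro s
          have : i 0 ≤ i s := hi.le_iff_le.2 (Fin.zero_le s)
          omega
        set N : ℕ := (Finset.univ.sup j) + 1 with hN
        have hjN : ∀ t, j t < N := fun t => Nat.lt_succ_of_le (Finset.le_sup (Finset.mem_univ t))
        rw [chM_factor i j hi1 hjN, cauchyBinet]
        apply Finset.sum_nonneg
        intro k hk
        have hk' : StrictMono k := mem_monoMaps.1 hk
        have hA : ((Matrix.of fun (s : Fin (r'+1)) (l : Fin N) =>
            (Nat.choose (i s - 1) (l : ℕ) : ℝ)).submatrix id k)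
            = chM (fun s => i s - 1) (fun t => (k t : ℕ)) := by
          ext s t; rfl
        have hsum : ∑ s, (i s - 1) + (r' + 1) = ∑ s, i s := by
          have h3 : ∑ s : Fin (r'+1), ((i s - 1) + 1) = ∑ s, i s :=
            Finset.sum_congr rfl (fun s _ => by have := hi1 s; omega)
          rw [Finset.sum_add_distrib] at h3
          simpa using h3
        have hm : (r' + 1) + ∑ s, (i s - 1) < n := by omega
        have h1 : 0 ≤ (chM (fun s => i s - 1) (fun t => (k t : ℕ))).det :=
          IH _ hm (r' + 1) _ _ (le_refl _)
            (fun a b hab => by have := hi hab; have := hi1 a; omega)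
            (fun a b hab => by exact_mod_cast hk' hab)
        rw [hA, det_toep_banded_transpose j k hj hk']
        exact mul_nonneg h1 (Finset.prod_nonneg fun s _ => seqExt_bump_nonneg _)

lemma detCh_nonneg {r : ℕ} (i j : Fin r → ℕ) (hi : StrictMono i) (hj : StrictMono j) :
    0 ≤ (chM i j).det :=
  detCh_nonneg_aux (r + ∑ s, i s) r i j (le_refl _) hi hj

lemma detCh_pos_aux : ∀ n : ℕ, ∀ r : ℕ, ∀ i j : Fin r → ℕ, r + ∑ s, i s ≤ n →
    StrictMono i → StrictMono j → (∀ s, j s ≤ i s) → 0 < (chM i j).det := by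
  intro n
  induction n using Nat.strong_induction_on with
  | _ n IH =>
    intro r i j hn hi hj hji
    match r with
    | 0 => rw [Matrix.det_fin_zero]; norm_num
    | (r' + 1) =>
      by_cases hi0 : i 0 = 0
      · have hj0 : j 0 = 0 := by have := hji 0; omega
        rw [Matrix.det_succ_row_zero, Finset.sum_eq_single 0]
        · have hsub : (chM i j).submatrix Fin.succ (Fin.succAbove 0)
              = chM (i ∘ Fin.succ) (j ∘ Fin.succ) := by
            rw [Fin.succAbove_zero]; rfl
          rw [hsub]
          have hm : r' + ∑ s, (i ∘ Fin.succ) s < n := by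
            have h2 : ∑ s : Fin (r'+1), i s = i 0 + ∑ s : Fin r', (i ∘ Fin.succ) s := by
              simpa [Function.comp] using Fin.sum_univ_succ i
            omega
          have hpos := IH _ hm r' (i ∘ Fin.succ) (j ∘ Fin.succ) (le_refl _)
            (hi.comp Fin.strictMono_succ) (hj.comp Fin.strictMono_succ)
            (fun s => hji _)
          have h00 : chM i j 0 0 = 1 := by
            rw [show chM i j 0 0 = (Nat.choose (i 0) (j 0) : ℝ) from rfl, hi0, hj0]
            simp
          simp only [Fin.val_zero, pow_zero, one_mul, h00]
          linarith
        · intro t _ ht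
          have hjt : 0 < j t := by
            have : j 0 < j t := hj (Fin.pos_iff_ne_zero.2 ht)
            omega
          have : chM i j 0 t = 0 := by
            rw [show chM i j 0 t = (Nat.choose (i 0) (j t) : ℝ) from rfl, hi0,
              Nat.choose_eq_zero_of_lt hjt]
            simp
          rw [this, mul_zero, zero_mul]
        · intro h; exact absurd (Finset.mem_univ _) h
      · -- Pascal step
        have hi1 : ∀ s, 1 ≤ i s := by
          intro s
          have : i 0 ≤ i s := hi.le_iff_le.2 (Fin.zero_le s)
          omega
        set N : ℕ := (Finset.univ.sup j) + 1 with hN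
        have hjN : ∀ t, j t < N := fun t => Nat.lt_succ_of_le (Finset.le_sup (Finset.mem_univ t))
        rw [chM_factor i j hi1 hjN, cauchyBinet]
        -- the greedy middle index
        set k0n : Fin (r' + 1) → ℕ := fun t => if j t < i t then j t else j t - 1 with hk0n
        have hk0n_le : ∀ t, k0n t ≤ j t := by
          intro t
          rw [hk0n]
          dsimp only
          split <;> omega
        have hk0n_mono : StrictMono k0n := by
          intro a b hab
          have h1 : j a < j b := hj hab
          have h2 : i a < i b := hi hab
          have h3 : j a ≤ i a := hji a
          have h4 : j b ≤ i b := hji b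
          have h5 : 1 ≤ i a := hi1 a
          have h6 : 1 ≤ i b := hi1 b
          rw [hk0n]
          dsimp only
          by_cases hA : j a < i a
          · rw [if_pos hA]
            by_cases hB : j b < i b
            · rw [if_pos hB]; omega
            · rw [if_neg hB]; omega
          · rw [if_neg hA]
            by_cases hB : j b < i b
            · rw [if_pos hB]; omega
            · rw [if_neg hB]; omega
        set k0 : Fin (r' + 1) → Fin N := fun t => ⟨k0n t, by
          have := hk0n_le t; have := hjN t; omega⟩ with hk0
        have hk0_mono : StrictMono k0 := by
          intro a b hab
          rw [Fin.lt_def]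
          exact hk0n_mono hab
        have hk0_mem : k0 ∈ monoMaps (r' + 1) N := mem_monoMaps.2 hk0_mono
        -- every term is nonnegative
        have hterm_nonneg : ∀ k ∈ monoMaps (r' + 1) N,
            0 ≤ ((Matrix.of fun (s : Fin (r'+1)) (l : Fin N) =>
                  (Nat.choose (i s - 1) (l : ℕ) : ℝ)).submatrix id k).det *
                ((Matrix.of fun (l : Fin N) (t : Fin (r'+1)) =>
                  seqExt bump ((j t : ℤ) - l)).submatrix k id).det := by
          intro k hk
          have hk' : StrictMono k := mem_monoMaps.1 hk
          have hA : ((Matrix.of fun (s : Fin (r'+1)) (l : Fin N) =>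
              (Nat.choose (i s - 1) (l : ℕ) : ℝ)).submatrix id k)
              = chM (fun s => i s - 1) (fun t => (k t : ℕ)) := by
            ext s t; rfl
          rw [hA, det_toep_banded_transpose j k hj hk']
          refine mul_nonneg (detCh_nonneg _ _ ?_ ?_)
            (Finset.prod_nonneg fun s _ => seqExt_bump_nonneg _)
          · exact fun a b hab => by have := hi hab; have := hi1 a; omega
          · exact fun a b hab => by exact_mod_cast hk' hab
        -- the greedy term is positive
        have hterm_pos : 0 < ((Matrix.of fun (s : Fin (r'+1)) (l : Fin N) =>
              (Nat.choose (i s - 1) (l : ℕ) : ℝ)).submatrix id k0).det *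
            ((Matrix.of fun (l : Fin N) (t : Fin (r'+1)) =>
              seqExt bump ((j t : ℤ) - l)).submatrix k0 id).det := by
          have hA : ((Matrix.of fun (s : Fin (r'+1)) (l : Fin N) =>
              (Nat.choose (i s - 1) (l : ℕ) : ℝ)).submatrix id k0)
              = chM (fun s => i s - 1) k0n := by
            ext s t; rfl
          have hsum : ∑ s, (i s - 1) + (r' + 1) = ∑ s, i s := by
            have h3 : ∑ s : Fin (r'+1), ((i s - 1) + 1) = ∑ s, i s :=
              Finset.sum_congr rfl (fun s _ => by have := hi1 s; omega)
            rw [Finset.sum_add_distrib] at h3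
            simpa using h3
          have hm : (r' + 1) + ∑ s, (i s - 1) < n := by omega
          have h1 : 0 < (chM (fun s => i s - 1) k0n).det := by
            apply IH _ hm (r' + 1) _ _ (le_refl _)
              (fun a b hab => by have := hi hab; have := hi1 a; omega)
              hk0n_mono
            intro s
            have h3 := hji s
            have h4 := hi1 s
            rw [hk0n]
            dsimp only
            split <;> omega
          have h2 : ((Matrix.of fun (l : Fin N) (t : Fin (r'+1)) =>
              seqExt bump ((j t : ℤ) - l)).submatrix k0 id).det = 1 := by
            rw [det_toep_banded_transpose j k0 hj hk0_mono]
            have hone : ∀ s, seqExt bump ((j s : ℤ) - ((k0 s : Fin N) : ℕ)) = 1 := by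
              intro s
              have hle := hk0n_le s
              have hge : j s ≤ k0n s + 1 := by
                have := hji s
                have := hi1 s
                rw [hk0n]
                dsimp only
                split <;> omega
              have hval : ((k0 s : Fin N) : ℕ) = k0n s := rfl
              rw [hval, seqExt_eq, if_pos hle]
              have : j s - k0n s ≤ 1 := by omega
              simp [bump, this]
            rw [Finset.prod_congr rfl (fun s _ => hone s)]
            simp
          rw [hA, h2, mul_one]
          exact h1
        calc (0:ℝ) < _ := hterm_pos
          _ ≤ _ := Finset.single_le_sum hterm_nonneg hk0_mem

lemma detCh_pos {r : ℕ} (i j : Fin r → ℕ) (hi : StrictMono i) (hj : StrictMono j)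
    (hji : ∀ s, j s ≤ i s) : 0 < (chM i j).det :=
  detCh_pos_aux (r + ∑ s, i s) r i j (le_refl _) hi hj hji

/-- Coefficients of `exp (γ X)`. -/
noncomputable def expSeq (γ : ℝ) : ℕ → ℝ := fun k => γ ^ k / (Nat.factorial k : ℝ)

lemma toep_exp_entry (γ : ℝ) (hγ : 0 < γ) (I J : ℕ) :
    seqExt (expSeq γ) ((I : ℤ) - J)
      = (γ ^ I / (Nat.factorial I : ℝ)) *
        (((Nat.factorial J : ℝ) / γ ^ J) * (Nat.choose I J : ℝ)) := by
  rw [seqExt_eq]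
  rcases le_or_gt J I with h | h
  · rw [if_pos h, Nat.cast_choose ℝ h]
    have hpow : γ ^ I = γ ^ J * γ ^ (I - J) := by
      rw [← pow_add]
      congr 1
      omega
    have hγJ : γ ^ J ≠ 0 := pow_ne_zero _ (ne_of_gt hγ)
    have hfI : (Nat.factorial I : ℝ) ≠ 0 := Nat.cast_ne_zero.2 (Nat.factorial_ne_zero I)
    have hfJ : (Nat.factorial J : ℝ) ≠ 0 := Nat.cast_ne_zero.2 (Nat.factorial_ne_zero J)
    have hfIJ : (Nat.factorial (I - J) : ℝ) ≠ 0 := Nat.cast_ne_zero.2 (Nat.factorial_ne_zero _)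
    unfold expSeq
    field_simp
    rw [hpow]
    ring
  · rw [if_neg (not_le.2 h), Nat.choose_eq_zero_of_lt h]
    simp

lemma det_toep_exp (γ : ℝ) (hγ : 0 < γ) {r : ℕ} (i j : Fin r → ℕ) :
    (toep (expSeq γ) i j).det
      = (∏ s, γ ^ (i s) / (Nat.factorial (i s) : ℝ)) *
        ((∏ t, (Nat.factorial (j t) : ℝ) / γ ^ (j t)) * (chM i j).det) := by
  have h1 : toep (expSeq γ) i j
      = Matrix.of fun s t => (γ ^ (i s) / (Nat.factorial (i s) : ℝ)) *
          ((Matrix.of fun s t => ((Nat.factorial (j t) : ℝ) / γ ^ (j t)) * chM i j s t) s t) := by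
    ext s t
    exact toep_exp_entry γ hγ (i s) (j t)
  rw [h1, Matrix.det_mul_column]
  congr 1
  rw [Matrix.det_mul_row]

lemma isTP_expSeq (γ : ℝ) (hγ : 0 < γ) : IsTotallyPositive (expSeq γ) := by
  intro r _ i j hi hj
  rw [show (Matrix.of fun s t => seqExt (expSeq γ) ((i s : ℤ) - (j t : ℤ)))
      = toep (expSeq γ) i j from rfl, det_toep_exp γ hγ i j]
  have hf : ∀ k : ℕ, (0:ℝ) < (Nat.factorial k : ℝ) :=
    fun k => Nat.cast_pos.2 (Nat.factorial_pos k)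
  refine mul_nonneg (Finset.prod_nonneg fun s _ => le_of_lt (by positivity)) ?_
  refine mul_nonneg (Finset.prod_nonneg fun t _ => le_of_lt (by positivity)) ?_
  exact detCh_nonneg i j hi hj

lemma det_toep_exp_pos (γ : ℝ) (hγ : 0 < γ) {r : ℕ} (i j : Fin r → ℕ)
    (hi : StrictMono i) (hj : StrictMono j) (hji : ∀ s, j s ≤ i s) :
    0 < (toep (expSeq γ) i j).det := by
  rw [det_toep_exp γ hγ i j]
  have hf : ∀ k : ℕ, (0:ℝ) < (Nat.factorial k : ℝ) :=
    fun k => Nat.cast_pos.2 (Nat.factorial_pos k)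
  refine mul_pos (Finset.prod_pos fun s _ => by positivity) ?_
  refine mul_pos (Finset.prod_pos fun t _ => by positivity) ?_
  exact detCh_pos i j hi hj hji


open PowerSeries

lemma coeff_mul_eq_conv (f g : ℝ⟦X⟧) (k : ℕ) :
    PowerSeries.coeff k (f * g)
      = conv (fun n => PowerSeries.coeff n f) (fun n => PowerSeries.coeff n g) k := by
  rw [PowerSeries.coeff_mul, conv]
  exact Finset.Nat.sum_antidiagonal_eq_sum_range_succ
    (fun a b => PowerSeries.coeff a f * PowerSeries.coeff b g) k

lemma isTP_coeff_mul {f g : ℝ⟦X⟧} (hf : IsTotallyPositive fun n => PowerSeries.coeff n f)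
    (hg : IsTotallyPositive fun n => PowerSeries.coeff n g) :
    IsTotallyPositive fun n => PowerSeries.coeff n (f * g) :=
  isTP_congr (fun k => coeff_mul_eq_conv f g k) (isTP_conv hf hg)

lemma isTP_coeff_one : IsTotallyPositive fun n => PowerSeries.coeff n (1 : ℝ⟦X⟧) := by
  apply isTP_of_support01
  · intro k
    rw [PowerSeries.coeff_one]
    split <;> norm_num
  · intro k hk
    rw [PowerSeries.coeff_one, if_neg (by omega)]

lemma isTP_coeff_linear (t : ℝ) (ht : 0 ≤ t) :
    IsTotallyPositive fun n => PowerSeries.coeff n (1 + PowerSeries.C t * PowerSeries.X) := by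
  have hc : ∀ n, PowerSeries.coeff n (1 + PowerSeries.C t * PowerSeries.X)
      = (if n = 0 then 1 else 0) + t * (if n = 1 then 1 else 0) := by
    intro n
    rw [map_add, PowerSeries.coeff_one, PowerSeries.coeff_C_mul, PowerSeries.coeff_X]
  apply isTP_of_support01
  · intro k
    rw [hc]
    match k with
    | 0 => norm_num
    | 1 => simpa using ht
    | (k+2) => rw [if_neg (by omega : ¬ k+2 = 0), if_neg (by omega : ¬ k+2 = 1)]; norm_num
  · intro k hk
    rw [hc, if_neg (by omega), if_neg (by omega)]
    norm_num

lemma isTP_coeff_geom (u : ℝ) (hu : 0 ≤ u) :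
    IsTotallyPositive fun n => PowerSeries.coeff n (PowerSeries.mk fun k => u ^ k) := by
  apply isTP_congr (fun k => PowerSeries.coeff_mk k _)
  intro r _ i j hi hj
  exact det_toep_geom_nonneg u hu r i j hi hj

lemma isTP_coeff_prod {ι : Type*} (s : Finset ι) (F : ι → ℝ⟦X⟧)
    (h : ∀ x ∈ s, IsTotallyPositive fun n => PowerSeries.coeff n (F x)) :
    IsTotallyPositive fun n => PowerSeries.coeff n (∏ x ∈ s, F x) :=
  Finset.prod_induction F (fun f => IsTotallyPositive fun n => PowerSeries.coeff n f)
    (fun f g hf hg => isTP_coeff_mul hf hg) isTP_coeff_one h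

lemma one_sub_mul_geom (u : ℝ) :
    (1 - PowerSeries.C u * PowerSeries.X) * (PowerSeries.mk fun k => u ^ k) = 1 := by
  ext n
  rw [sub_mul, one_mul, map_sub, mul_assoc, PowerSeries.coeff_C_mul]
  cases n with
  | zero => simp
  | succ n =>
    rw [PowerSeries.coeff_succ_X_mul, PowerSeries.coeff_mk, PowerSeries.coeff_mk,
      PowerSeries.coeff_one, if_neg (Nat.succ_ne_zero n)]
    rw [pow_succ]
    ring

lemma prod_geom_inv {n : ℕ} (u : Fin n → ℝ) :
    (∏ j, (1 - PowerSeries.C (u j) * PowerSeries.X))⁻¹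
      = ∏ j, (PowerSeries.mk fun k => u j ^ k) := by
  have hc : PowerSeries.constantCoeff (∏ j, (1 - PowerSeries.C (u j) * PowerSeries.X)) = 1 := by
    rw [map_prod]
    simp
  rw [PowerSeries.inv_eq_iff_mul_eq_one (by rw [hc]; norm_num)]
  rw [← Finset.prod_mul_distrib]
  exact Finset.prod_eq_one (fun j _ => by rw [mul_comm]; exact one_sub_mul_geom (u j))


end PFAux
end

open Finset Matrix PFAux

open PowerSeries in
/-- Lemma 3.4 (case `γ > 0`): the coefficient sequence of
`exp(γX)·∏(1+t_iX)·(∏(1−u_jX))⁻¹ ∈ ℝ[[X]]`, with `γ > 0` and `t_i, u_j ≥ 0`, is a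
PP-sequence. -/
theorem pp_of_exp_factor (γ : ℝ) (hγ : 0 < γ) (m n : ℕ)
    (t : Fin m → ℝ) (u : Fin n → ℝ) (ht : ∀ i, 0 ≤ t i) (hu : ∀ j, 0 ≤ u j)
    (a : ℕ → ℝ)
    (ha : ∀ k, a k = PowerSeries.coeff k
      ((PowerSeries.mk fun i => γ ^ i / i.factorial) *
        (∏ i, (1 + PowerSeries.C (t i) * PowerSeries.X)) *
        (∏ j, (1 - PowerSeries.C (u j) * PowerSeries.X))⁻¹)) :
    IsPP a := by
  classical
  set P : ℝ⟦X⟧ := ∏ i, (1 + PowerSeries.C (t i) * PowerSeries.X) with hP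
  set G : ℝ⟦X⟧ := ∏ j, (1 - PowerSeries.C (u j) * PowerSeries.X) with hG
  set c : ℕ → ℝ := fun k => PowerSeries.coeff k (P * G⁻¹) with hcdef
  have hTPc : IsTotallyPositive c := by
    apply isTP_coeff_mul
    · exact isTP_coeff_prod Finset.univ _ (fun x _ => isTP_coeff_linear (t x) (ht x))
    · rw [hG, prod_geom_inv u]
      exact isTP_coeff_prod Finset.univ _ (fun x _ => isTP_coeff_geom (u x) (hu x))
  have hc0 : c 0 = 1 := by
    rw [hcdef]
    simp only [PowerSeries.coeff_zero_eq_constantCoeff]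
    have h1 : PowerSeries.constantCoeff P = 1 := by
      rw [hP, map_prod]
      simp
    have h2 : PowerSeries.constantCoeff G⁻¹ = 1 := by
      rw [hG, prod_geom_inv u, map_prod]
      simp [PowerSeries.constantCoeff_mk]
    rw [_root_.map_mul, h1, h2, mul_one]
  have haconv : ∀ k, a k = conv (expSeq γ) c k := by
    intro k
    rw [ha k, mul_assoc, coeff_mul_eq_conv]
    have h1 : (fun n => PowerSeries.coeff n (PowerSeries.mk fun i => γ ^ i / i.factorial))
        = expSeq γ := funext fun n => PowerSeries.coeff_mk n _
    rw [h1]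
  have hafun : a = conv (expSeq γ) c := funext haconv
  constructor
  · exact isTP_congr haconv (isTP_conv (isTP_expSeq γ hγ) hTPc)
  · intro r hr i j hi hj hji
    have hmat : (Matrix.of fun s t' => seqExt a ((i s : ℤ) - (j t' : ℤ)))
        = toep (conv (expSeq γ) c) i j := by
      rw [hafun]
      rfl
    rw [hmat]
    set N : ℕ := max (Finset.univ.sup i) (Finset.univ.sup j) + 1 with hN
    have hNi : ∀ s, i s < N := fun s => by
      have := Finset.le_sup (f := i) (Finset.mem_univ s)
      omega
    have hNj : ∀ s, j s < N := fun s => by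
      have := Finset.le_sup (f := j) (Finset.mem_univ s)
      omega
    rw [toep_conv_factor _ _ i j hNi, cauchyBinet]
    set k0 : Fin r → Fin N := fun s => ⟨j s, hNj s⟩ with hk0
    have hk0mono : StrictMono k0 := by
      intro x y hxy
      rw [Fin.lt_def]
      exact hj hxy
    have hterm_nonneg : ∀ k ∈ monoMaps r N,
        0 ≤ ((Matrix.of fun (s : Fin r) (l : Fin N) =>
              seqExt (expSeq γ) ((i s : ℤ) - l)).submatrix id k).det *
            ((Matrix.of fun (l : Fin N) (t' : Fin r) =>
              seqExt c ((l : ℤ) - j t')).submatrix k id).det := by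
      intro k hk
      have hk' : StrictMono k := mem_monoMaps.1 hk
      have hkn : StrictMono (fun s => ((k s : Fin N) : ℕ)) :=
        fun x y hxy => by exact_mod_cast hk' hxy
      have hA : ((Matrix.of fun (s : Fin r) (l : Fin N) =>
          seqExt (expSeq γ) ((i s : ℤ) - l)).submatrix id k)
          = toep (expSeq γ) i (fun s => ((k s : Fin N) : ℕ)) := by
        ext s t'; rfl
      have hB : ((Matrix.of fun (l : Fin N) (t' : Fin r) =>
          seqExt c ((l : ℤ) - j t')).submatrix k id)
          = toep c (fun s => ((k s : Fin N) : ℕ)) j := by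
        ext s t'; rfl
      rw [hA, hB]
      exact mul_nonneg (isTP_expSeq γ hγ r hr i _ hi hkn) (hTPc r hr _ j hkn hj)
    have hterm_pos : 0 < ((Matrix.of fun (s : Fin r) (l : Fin N) =>
          seqExt (expSeq γ) ((i s : ℤ) - l)).submatrix id k0).det *
        ((Matrix.of fun (l : Fin N) (t' : Fin r) =>
          seqExt c ((l : ℤ) - j t')).submatrix k0 id).det := by
      have hA : ((Matrix.of fun (s : Fin r) (l : Fin N) =>
          seqExt (expSeq γ) ((i s : ℤ) - l)).submatrix id k0)
          = toep (expSeq γ) i j := by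
        ext s t'; rfl
      have hB : ((Matrix.of fun (l : Fin N) (t' : Fin r) =>
          seqExt c ((l : ℤ) - j t')).submatrix k0 id)
          = toep c j j := by
        ext s t'; rfl
      rw [hA, hB, det_toep_diag c j hj, hc0, one_pow, mul_one]
      exact det_toep_exp_pos γ hγ i j hi hj hji
    calc (0:ℝ) < _ := hterm_pos
      _ ≤ _ := Finset.single_le_sum hterm_nonneg (mem_monoMaps.2 hk0mono)
end

section
/- Let a, b : ℕ → ℝ, extended by the value 0 on negative indices, with a_0 = 1. Suppose a is totally positive and b is both totally positive and a PP-sequence. Then the Cauchy product c defined by c_k = Σ_{i=0}^{k} a_i b_{k−i} is a PP-sequence. (Observation 4 in the proof of Lemma 3.4) -/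
open Finset Matrix Equiv

theorem cauchyBinet {r n : ℕ} (A : Matrix (Fin r) (Fin n) ℝ) (B : Matrix (Fin n) (Fin r) ℝ)
    [DecidablePred fun g : Fin r → Fin n => StrictMono g] :
    (A * B).det = ∑ g ∈ Finset.univ.filter (fun g : Fin r → Fin n => StrictMono g),
      (A.submatrix id g).det * (B.submatrix g id).det := by
  classical
  have step1 : (A * B).det
      = ∑ f : Fin r → Fin n, (∏ i, B (f i) i) * (A.submatrix id f).det := by
    simp only [Matrix.det_apply', Matrix.mul_apply, Matrix.submatrix_apply, id_eq,
      Finset.prod_univ_sum, Fintype.piFinset_univ, Finset.mul_sum]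
    rw [Finset.sum_comm]
    refine Finset.sum_congr rfl fun f _ => ?_
    refine Finset.sum_congr rfl fun σ _ => ?_
    rw [Finset.prod_mul_distrib]
    ring
  have step2 : (A * B).det
      = ∑ f ∈ univ.filter (fun f : Fin r → Fin n => Function.Injective f),
          (∏ i, B (f i) i) * (A.submatrix id f).det := by
    rw [step1]
    symm
    apply Finset.sum_subset (Finset.filter_subset _ _)
    intro f _ hf
    simp only [Finset.mem_filter, Finset.mem_univ, true_and] at hf
    obtain ⟨x, y, hxy, hne⟩ : ∃ x y, f x = f y ∧ x ≠ y := by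
      rw [Function.Injective] at hf; push_neg at hf; exact hf
    rw [Matrix.det_zero_of_column_eq hne (fun k => by
      simp only [Matrix.submatrix_apply, hxy]), mul_zero]
  have step3 : (A * B).det
      = ∑ p ∈ (univ.filter fun g : Fin r → Fin n => StrictMono g) ×ˢ
            (univ : Finset (Perm (Fin r))),
          (∏ i, B ((p.1 ∘ p.2) i) i) * (A.submatrix id (p.1 ∘ p.2)).det := by
    rw [step2]
    refine Finset.sum_nbij' (i := fun f => (f ∘ Tuple.sort f, (Tuple.sort f)⁻¹))
      (j := fun p => p.1 ∘ p.2) ?_ ?_ ?_ ?_ ?_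
    · intro f hf
      simp only [Finset.mem_filter, Finset.mem_univ, true_and] at hf
      simp only [Finset.mem_product, Finset.mem_filter, Finset.mem_univ, true_and, and_true]
      exact (Tuple.monotone_sort f).strictMono_of_injective (hf.comp (Equiv.injective _))
    · intro p hp
      simp only [Finset.mem_product, Finset.mem_filter, Finset.mem_univ, true_and, and_true] at hp
      simp only [Finset.mem_filter, Finset.mem_univ, true_and]
      exact hp.injective.comp (Equiv.injective _)
    · intro f hf
      funext x
      simp [Function.comp, Equiv.Perm.inv_def, Equiv.apply_symm_apply]
    · rintro ⟨g, σ⟩ hp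
      simp only [Finset.mem_product, Finset.mem_filter, Finset.mem_univ, true_and, and_true] at hp
      have hinj : Function.Injective (g ∘ σ) := hp.injective.comp (Equiv.injective _)
      have h2 : (g ∘ ⇑σ) ∘ ⇑σ⁻¹ = g := by
        funext x; simp [Function.comp]
      have hm2 : Monotone ((g ∘ ⇑σ) ∘ ⇑σ⁻¹) := by rw [h2]; exact hp.monotone
      have huniq := Tuple.unique_monotone (Tuple.monotone_sort (g ∘ ⇑σ)) hm2
      have hsort : Tuple.sort (g ∘ ⇑σ) = σ⁻¹ := by
        apply Equiv.coe_fn_injective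
        funext x
        exact hinj (congrFun huniq x)
      refine Prod.ext ?_ ?_
      · show (g ∘ ⇑σ) ∘ ⇑(Tuple.sort (g ∘ ⇑σ)) = g
        rw [hsort, h2]
      · show (Tuple.sort (g ∘ ⇑σ))⁻¹ = σ
        rw [hsort, inv_inv]
    · intro f hf
      have : (f ∘ ⇑(Tuple.sort f)) ∘ ⇑(Tuple.sort f)⁻¹ = f := by
        funext x; simp [Function.comp, Equiv.Perm.inv_def, Equiv.apply_symm_apply]
      simp only [this]
  rw [step3, Finset.sum_product]
  refine Finset.sum_congr rfl fun g hg => ?_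
  simp only [Finset.mem_filter, Finset.mem_univ, true_and] at hg
  have key : ∀ σ : Perm (Fin r), (A.submatrix id (g ∘ ⇑σ)).det
      = (Equiv.Perm.sign σ : ℤ) * (A.submatrix id g).det := fun σ => by
    have h : A.submatrix id (g ∘ ⇑σ) = (A.submatrix id g).submatrix id ⇑σ := rfl
    rw [h, Matrix.det_permute']
  rw [Matrix.det_apply' (B.submatrix g id), Finset.mul_sum]
  refine Finset.sum_congr rfl fun σ _ => ?_
  rw [key σ]
  simp only [Matrix.submatrix_apply, id_eq, Function.comp]
  ring

theorem seqExt_conv (a b c : ℕ → ℝ)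
    (hc : ∀ k, c k = ∑ i ∈ Finset.range (k + 1), a i * b (k - i))
    (x y N : ℕ) (hxN : x < N) :
    seqExt c ((x : ℤ) - y) = ∑ m : Fin N, seqExt a ((x : ℤ) - (m : ℕ)) * seqExt b (((m : ℕ) : ℤ) - y) := by
  rcases le_or_gt y x with hyx | hxy
  · have h0 : (0 : ℤ) ≤ (x : ℤ) - y := by omega
    have hL : seqExt c ((x : ℤ) - y) = c (x - y) := by
      rw [seqExt, if_pos h0]
      congr 1
      omega
    rw [hL, hc,
      Fin.sum_univ_eq_sum_range (fun m : ℕ => seqExt a ((x : ℤ) - m) * seqExt b ((m : ℤ) - y)) N]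
    have hsub : Finset.Icc y x ⊆ Finset.range N := by
      intro m hm
      simp only [Finset.mem_Icc] at hm
      simp only [Finset.mem_range]
      omega
    rw [show (∑ m ∈ Finset.range N, seqExt a ((x : ℤ) - m) * seqExt b ((m : ℤ) - y))
        = ∑ m ∈ Finset.Icc y x, seqExt a ((x : ℤ) - m) * seqExt b ((m : ℤ) - y) from
      (Finset.sum_subset hsub (fun m _ hm => by
        simp only [Finset.mem_Icc] at hm
        push_neg at hm
        rcases lt_or_ge m y with h | h
        · rw [show seqExt b ((m : ℤ) - y) = 0 from by rw [seqExt, if_neg (by omega)], mul_zero]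
        · rw [show seqExt a ((x : ℤ) - m) = 0 from by
            rw [seqExt, if_neg (by specialize hm h; omega)], zero_mul])).symm]
    refine Finset.sum_nbij' (i := fun i => x - i) (j := fun m => x - m) ?_ ?_ ?_ ?_ ?_
    · intro i hi; simp only [Finset.mem_range] at hi; simp only [Finset.mem_Icc]; omega
    · intro m hm; simp only [Finset.mem_Icc] at hm; simp only [Finset.mem_range]; omega
    · intro i hi; simp only [Finset.mem_range] at hi
      show x - (x - i) = i
      omega
    · intro m hm; simp only [Finset.mem_Icc] at hm
      show x - (x - m) = m
      omega
    · intro i hi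
      simp only [Finset.mem_range] at hi
      have h1 : seqExt a ((x : ℤ) - (x - i : ℕ)) = a i := by
        rw [seqExt, if_pos (by omega)]
        congr 1
        omega
      have h2 : seqExt b (((x - i : ℕ) : ℤ) - y) = b (x - y - i) := by
        rw [seqExt, if_pos (by omega)]
        congr 1
        omega
      rw [h1, h2]
  · rw [show seqExt c ((x : ℤ) - y) = 0 from by rw [seqExt, if_neg (by omega)]]
    symm
    apply Finset.sum_eq_zero
    intro m _
    rcases lt_or_ge (m : ℕ) y with h | h
    · rw [show seqExt b (((m : ℕ) : ℤ) - y) = 0 from by rw [seqExt, if_neg (by omega)], mul_zero]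
    · rw [show seqExt a ((x : ℤ) - (m : ℕ)) = 0 from by rw [seqExt, if_neg (by omega)], zero_mul]

/-- Observation 4 in the proof of Lemma 3.4: the Cauchy product of a totally positive
sequence with `a₀ = 1` and a totally positive PP-sequence is a PP-sequence. -/
theorem pp_of_cauchy_product (a b : ℕ → ℝ) (ha0 : a 0 = 1)
    (ha : IsTotallyPositive a) (hb : IsTotallyPositive b) (hbPP : IsPP b)
    (c : ℕ → ℝ) (hc : ∀ k, c k = ∑ i ∈ Finset.range (k + 1), a i * b (k - i)) :
    IsPP c := by
  classical
  have main : ∀ r : ℕ, 0 < r → ∀ i j : Fin r → ℕ, StrictMono i → StrictMono j →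
      0 ≤ (Matrix.of fun s t => seqExt c ((i s : ℤ) - (j t : ℤ))).det ∧
      ((∀ s, j s ≤ i s) →
        0 < (Matrix.of fun s t => seqExt c ((i s : ℤ) - (j t : ℤ))).det) := by
    intro r hr i j hi hj
    set N : ℕ := i ⟨r - 1, by omega⟩ + 1 with hN
    have hiN : ∀ s, i s < N := by
      intro s
      have : i s ≤ i ⟨r - 1, by omega⟩ := hi.monotone (by
        simp only [Fin.le_def]
        omega)
      omega
    set A : Matrix (Fin r) (Fin N) ℝ := fun s m => seqExt a ((i s : ℤ) - (m : ℕ)) with hA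
    set B : Matrix (Fin N) (Fin r) ℝ := fun m t => seqExt b (((m : ℕ) : ℤ) - j t) with hB
    have hAB : (Matrix.of fun s t => seqExt c ((i s : ℤ) - (j t : ℤ))) = A * B := by
      ext s t
      rw [Matrix.mul_apply]
      exact seqExt_conv a b c hc (i s) (j t) N (hiN s)
    have hnn : ∀ g : Fin r → Fin N, StrictMono g →
        0 ≤ (A.submatrix id g).det ∧ 0 ≤ (B.submatrix g id).det := by
      intro g hg
      have hgv : StrictMono (fun t => (g t : ℕ)) := fun x y hxy => hg hxy
      constructor
      · exact ha r hr i (fun t => (g t : ℕ)) hi hgv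
      · exact hb r hr (fun s => (g s : ℕ)) j hgv hj
    rw [hAB, cauchyBinet A B]
    constructor
    · refine Finset.sum_nonneg fun g hg => ?_
      simp only [Finset.mem_filter, Finset.mem_univ, true_and] at hg
      exact mul_nonneg (hnn g hg).1 (hnn g hg).2
    · intro hji
      refine Finset.sum_pos' (fun g hg => by
        simp only [Finset.mem_filter, Finset.mem_univ, true_and] at hg
        exact mul_nonneg (hnn g hg).1 (hnn g hg).2) ?_
      set g₀ : Fin r → Fin N := fun s => ⟨i s, hiN s⟩ with hg₀
      have hg₀m : StrictMono g₀ := fun x y hxy => by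
        simp only [hg₀, Fin.mk_lt_mk]
        exact hi hxy
      refine ⟨g₀, Finset.mem_filter.mpr ⟨Finset.mem_univ _, hg₀m⟩, ?_⟩
      have hAdet : (A.submatrix id g₀).det = 1 := by
        have htri : (A.submatrix id g₀).BlockTriangular OrderDual.toDual := by
          intro s t hst
          simp only [OrderDual.toDual_lt_toDual] at hst
          show seqExt a ((i s : ℤ) - (i t : ℕ)) = 0
          have : i s < i t := hi hst
          rw [seqExt, if_neg (by omega)]
        rw [Matrix.det_of_lowerTriangular _ htri]
        have : ∀ s : Fin r, (A.submatrix id g₀) s s = 1 := by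
          intro s
          show seqExt a ((i s : ℤ) - (i s : ℕ)) = 1
          rw [seqExt, if_pos (by omega)]
          rw [show ((i s : ℤ) - (i s : ℕ)).toNat = 0 from by omega]
          exact ha0
        rw [Finset.prod_congr rfl (fun s _ => this s), Finset.prod_const_one]
      have hBdet : 0 < (B.submatrix g₀ id).det := by
        have := hbPP.2 r hr i j hi hj hji
        exact this
      rw [hAdet, one_mul]
      exact hBdet
  constructor
  · intro r hr i j hi hj
    exact (main r hr i j hi hj).1
  · intro r hr i j hi hj hji
    exact (main r hr i j hi hj).2 hji
end
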